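/- Under the affine-in-U additive noise model, if the vector c₁ + P(A=0 | Z) c₃ is orthogonal to E[U | Z, A=1] − E[U | Z, A=0] (conditionally on Z, almost surely), then the naive proxy-adjusted estimator E[Y | Z, A=1] − E[Y | Z, A=0] equals the true CATE E[Y(1) − Y(0) | Z] almost surely. -/

import Mathlib

/-!
Write `P = P(A = 1 | Z)` and `E_s[· | Z]` for conditional expectation under `μ[|s]`. Everything
rests on Bayes' formula `P(s | Z) • E_s[f | Z] = E[1_s f | Z]`. It gives the mixture
`E[U | Z] = P • E_1[U | Z] + (1 - P) • E_0[U | Z]`, and, since `E[1_{A=a} ε_Y | Z] = 0` and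
`P(A = a | Z) > 0`, the arm formulas `E_a[Y | Z] = c₀ + a c₂ + (c₁ + a c₃) ⬝ᵥ E_a[U | Z]`.
The CATE is `c₂ + c₃ ⬝ᵥ E[U | Z]`, so the naive contrast exceeds it by
`(c₁ + (1 - P) • c₃) ⬝ᵥ (E_1[U | Z] - E_0[U | Z])`.
-/

open Matrix MeasureTheory ProbabilityTheory

noncomputable def Matrix.dotProductCLM {ι : Type*} [Fintype ι] (d : ι → ℝ) :
    (ι → ℝ) →L[ℝ] ℝ :=
  LinearMap.toContinuousLinearMap (dotProductBilin ℝ ℝ d)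

@[simp] lemma Matrix.dotProductCLM_apply {ι : Type*} [Fintype ι] (d v : ι → ℝ) :
    dotProductCLM d v = d ⬝ᵥ v := rfl

lemma MeasureTheory.Integrable.cond {Ω E : Type*} [MeasurableSpace Ω] [NormedAddCommGroup E]
    {μ : Measure Ω} {f : Ω → E} (hf : Integrable f μ) (s : Set Ω) : Integrable f μ[|s] := by
  rcases eq_or_ne (μ s) 0 with hs | hs
  · simp [cond_eq_zero_of_meas_eq_zero hs]
  · exact hf.restrict.smul_measure (ENNReal.inv_ne_top.2 hs)

namespace ProbabilityTheory

variable {Ω : Type*} {m : MeasurableSpace Ω} [mΩ : MeasurableSpace Ω] {μ : Measure Ω} {s : Set Ω}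
  {E : Type*} [NormedAddCommGroup E] [NormedSpace ℝ E]

lemma measure_smul_cond [IsFiniteMeasure μ] (s : Set Ω) : μ s • μ[|s] = μ.restrict s := by
  rcases eq_or_ne (μ s) 0 with hs | hs
  · simp [hs, Measure.restrict_eq_zero.2 hs]
  · rw [cond, smul_smul, ENNReal.mul_inv_cancel hs (measure_ne_top μ s), one_smul]

lemma setIntegral_indicator_eq_smul_setIntegral_cond [IsFiniteMeasure μ] (hs : MeasurableSet s)
    (f : Ω → E) (t : Set Ω) :
    ∫ x in t, s.indicator f x ∂μ = μ.real s • ∫ x in t, f x ∂μ[|s] := by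
  rw [integral_indicator hs, Measure.restrict_comm hs, ← measure_smul_cond (μ := μ) s,
    Measure.restrict_smul, integral_smul_measure]
  rfl

variable [CompleteSpace E]

theorem condExp_indicator_ae_eq_smul_condExp_cond (hm : m ≤ mΩ) [IsFiniteMeasure μ]
    (hs : MeasurableSet s) {f : Ω → E} (hf : Integrable f μ) :
    μ[s.indicator f | m] =ᵐ[μ] μ[s.indicator (1 : Ω → ℝ) | m] • (μ[|s])[f | m] := by
  set g := (μ[|s])[f | m]
  have hind : s.indicator (1 : Ω → ℝ) • g = s.indicator g := by
    ext x; by_cases hx : x ∈ s <;> simp [hx]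
  have hg : Integrable (s.indicator g) μ := by
    rw [integrable_indicator_iff hs, IntegrableOn, ← measure_smul_cond]
    exact integrable_condExp.smul_measure (measure_ne_top μ s)
  have hpull : μ[s.indicator g | m] =ᵐ[μ] μ[s.indicator (1 : Ω → ℝ) | m] • g := by
    rw [← hind]
    exact condExp_smul_of_aestronglyMeasurable_right ((integrable_const 1).indicator hs)
      (hind ▸ hg) stronglyMeasurable_condExp.aestronglyMeasurable
  refine (ae_eq_condExp_of_forall_setIntegral_eq hm (hf.indicator hs)
    (fun t _ _ => (integrable_condExp.congr hpull).integrableOn) (fun t ht _ => ?_)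
    (stronglyMeasurable_condExp.smul stronglyMeasurable_condExp).aestronglyMeasurable).symm
  calc ∫ x in t, (μ[s.indicator (1 : Ω → ℝ) | m] • g) x ∂μ
      = ∫ x in t, s.indicator g x ∂μ := by
        rw [← setIntegral_congr_ae (hm t ht) (hpull.mono fun x hx _ => hx),
          setIntegral_condExp hm hg ht]
    _ = ∫ x in t, s.indicator f x ∂μ := by
      rw [setIntegral_indicator_eq_smul_setIntegral_cond hs,
        setIntegral_indicator_eq_smul_setIntegral_cond hs, setIntegral_condExp hm (hf.cond s) ht]

lemma condExp_cond_ae_eq_of_condExp_indicator_ae_eq (hm : m ≤ mΩ) [IsFiniteMeasure μ]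
    (hs : MeasurableSet s) (hpos : ∀ᵐ ω ∂μ, 0 < μ[s.indicator (1 : Ω → ℝ) | m] ω)
    {f g : Ω → E} (hf : Integrable f μ)
    (hg : μ[s.indicator f | m] =ᵐ[μ] μ[s.indicator (1 : Ω → ℝ) | m] • g) :
    (μ[|s])[f | m] =ᵐ[μ] g := by
  filter_upwards [condExp_indicator_ae_eq_smul_condExp_cond hm hs hf, hg, hpos]
    with ω hbayes hgω hposω
  exact smul_right_injective E hposω.ne' (hbayes.symm.trans hgω)

theorem condExp_ae_eq_smul_condExp_cond_add_smul_condExp_cond_compl (hm : m ≤ mΩ)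
    [IsFiniteMeasure μ] (hs : MeasurableSet s) {f : Ω → E} (hf : Integrable f μ) :
    μ[f | m] =ᵐ[μ] μ[s.indicator (1 : Ω → ℝ) | m] • (μ[|s])[f | m] +
      μ[sᶜ.indicator (1 : Ω → ℝ) | m] • (μ[|sᶜ])[f | m] := by
  conv_lhs => rw [← Set.indicator_self_add_compl s f]
  exact (condExp_add (hf.indicator hs) (hf.indicator hs.compl) m).trans
    ((condExp_indicator_ae_eq_smul_condExp_cond hm hs hf).add
      (condExp_indicator_ae_eq_smul_condExp_cond hm hs.compl hf))

lemma condExp_indicator_compl_one (hm : m ≤ mΩ) [IsFiniteMeasure μ] (hs : MeasurableSet s) :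
    μ[sᶜ.indicator (1 : Ω → ℝ) | m] =ᵐ[μ] 1 - μ[s.indicator (1 : Ω → ℝ) | m] := by
  rw [Set.indicator_compl]
  refine (condExp_sub (integrable_const 1) ((integrable_const 1).indicator hs) m).trans ?_
  rw [show (1 : Ω → ℝ) = fun _ => 1 from rfl, condExp_const hm]

lemma condExp_indicator_ae_eq_zero {n : MeasurableSpace Ω} (hmn : m ≤ n) (hn : n ≤ mΩ)
    [IsFiniteMeasure μ] (hs : MeasurableSet[n] s) {f : Ω → E} (hf : Integrable f μ)
    (hf0 : μ[f | n] =ᵐ[μ] 0) : μ[s.indicator f | m] =ᵐ[μ] 0 := by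
  have hind : μ[s.indicator f | n] =ᵐ[μ] 0 := by
    filter_upwards [condExp_indicator hf hs, hf0] with ω h h0
    by_cases hω : ω ∈ s <;> simp [h, hω, h0]
  calc μ[s.indicator f | m] =ᵐ[μ] μ[μ[s.indicator f | n] | m] :=
        (condExp_condExp_of_le hmn hn).symm
    _ =ᵐ[μ] μ[0 | m] := condExp_congr_ae hind
    _ = 0 := condExp_zero

variable {ι : Type*} [Fintype ι] {U : Ω → ι → ℝ}

lemma condExp_const_add_dotProduct (hm : m ≤ mΩ) [IsFiniteMeasure μ] (hU : Integrable U μ)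
    (κ : ℝ) (d : ι → ℝ) :
    μ[fun ω => κ + d ⬝ᵥ U ω | m] =ᵐ[μ] fun ω => κ + d ⬝ᵥ μ[U | m] ω := by
  simp only [add_comm κ]
  exact ((dotProductCLM d).comp_condExp_add_const_comm hm hU κ).symm

lemma condExp_indicator_const_add_dotProduct (hm : m ≤ mΩ) [IsFiniteMeasure μ]
    (hs : MeasurableSet s) (hU : Integrable U μ) (κ : ℝ) (d : ι → ℝ) :
    μ[s.indicator (fun ω => κ + d ⬝ᵥ U ω) | m] =ᵐ[μ]
      fun ω => μ[s.indicator (1 : Ω → ℝ) | m] ω * (κ + d ⬝ᵥ (μ[|s])[U | m] ω) := by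
  have hsplit : s.indicator (fun ω => κ + d ⬝ᵥ U ω) =
      κ • s.indicator (1 : Ω → ℝ) + dotProductCLM d ∘ s.indicator U := by
    ext ω; by_cases hω : ω ∈ s <;> simp [hω]
  have hind : Integrable (s.indicator (1 : Ω → ℝ)) μ := (integrable_const 1).indicator hs
  have hdU : Integrable (dotProductCLM d ∘ s.indicator U) μ :=
    (dotProductCLM d).integrable_comp (hU.indicator hs)
  rw [hsplit]
  filter_upwards [condExp_add (hind.smul κ) hdU m,
    (dotProductCLM d).comp_condExp_comm (hU.indicator hs) (m := m),
    condExp_smul κ (s.indicator (1 : Ω → ℝ)) m,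
    condExp_indicator_ae_eq_smul_condExp_cond hm hs hU] with ω hadd hcomm hsmul hbayes
  rw [hadd, Pi.add_apply, hsmul, ← hcomm]
  simp only [Pi.smul_apply, smul_eq_mul, Function.comp_apply, hbayes, Pi.smul_apply', map_smul,
    dotProductCLM_apply]
  ring

lemma condExp_cond_ae_eq_const_add_dotProduct (hm : m ≤ mΩ) [IsFiniteMeasure μ]
    (hs : MeasurableSet s) (hpos : ∀ᵐ ω ∂μ, 0 < μ[s.indicator (1 : Ω → ℝ) | m] ω)
    {Y ε : Ω → ℝ} (hY : Integrable Y μ) (hε : Integrable ε μ) (hU : Integrable U μ)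
    (hε0 : μ[s.indicator ε | m] =ᵐ[μ] 0) (κ : ℝ) (d : ι → ℝ)
    (hYs : ∀ ω ∈ s, Y ω = ε ω + (κ + d ⬝ᵥ U ω)) :
    (μ[|s])[Y | m] =ᵐ[μ] fun ω => κ + d ⬝ᵥ (μ[|s])[U | m] ω := by
  refine condExp_cond_ae_eq_of_condExp_indicator_ae_eq hm hs hpos hY ?_
  have hsplit : s.indicator Y = s.indicator ε + s.indicator (fun ω => κ + d ⬝ᵥ U ω) := by
    rw [← Set.indicator_add']
    exact Set.indicator_congr hYs
  have hW : Integrable (fun ω => κ + d ⬝ᵥ U ω) μ :=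
    (integrable_const κ).add ((dotProductCLM d).integrable_comp hU)
  rw [hsplit]
  filter_upwards [condExp_add (hε.indicator hs) (hW.indicator hs) m, hε0,
    condExp_indicator_const_add_dotProduct hm hs hU κ d] with ω hadd hε0ω hWω
  simp [hadd, hε0ω, hWω]


theorem condExp_cond_sub_condExp_cond_compl_ae_eq (hm : m ≤ mΩ) [IsFiniteMeasure μ]
    (hs : MeasurableSet s)
    (hpos : ∀ᵐ ω ∂μ, 0 < μ[s.indicator (1 : Ω → ℝ) | m] ω ∧ μ[s.indicator (1 : Ω → ℝ) | m] ω < 1)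
    {Y ε : Ω → ℝ} (hY : Integrable Y μ) (hε : Integrable ε μ) (hU : Integrable U μ)
    (hε₁ : μ[s.indicator ε | m] =ᵐ[μ] 0) (hε₀ : μ[sᶜ.indicator ε | m] =ᵐ[μ] 0)
    (c₀ c₂ : ℝ) (c₁ c₃ : ι → ℝ)
    (hYeq : ∀ ω, Y ω = ε ω + (c₀ + c₁ ⬝ᵥ U ω) + s.indicator (fun ω => c₂ + c₃ ⬝ᵥ U ω) ω) :
    (fun ω => (μ[|s])[Y | m] ω - (μ[|sᶜ])[Y | m] ω) =ᵐ[μ] fun ω =>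
      c₂ + c₃ ⬝ᵥ μ[U | m] ω + (c₁ + μ[sᶜ.indicator (1 : Ω → ℝ) | m] ω • c₃) ⬝ᵥ
        ((μ[|s])[U | m] ω - (μ[|sᶜ])[U | m] ω) := by
  have hcompl := condExp_indicator_compl_one hm hs (μ := μ) (m := m)
  have hposc : ∀ᵐ ω ∂μ, 0 < μ[sᶜ.indicator (1 : Ω → ℝ) | m] ω := by
    filter_upwards [hcompl, hpos] with ω h h'
    simp [h, h'.2]
  have h₁ := condExp_cond_ae_eq_const_add_dotProduct hm hs (hpos.mono fun _ h => h.1) hY hε hU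
    hε₁ (c₀ + c₂) (c₁ + c₃) fun ω hω => by
      rw [hYeq, Set.indicator_of_mem hω, add_dotProduct]; ring
  have h₀ := condExp_cond_ae_eq_const_add_dotProduct hm hs.compl hposc hY hε hU
    hε₀ c₀ c₁ fun ω hω => by
      rw [hYeq, Set.indicator_of_notMem hω]; ring
  filter_upwards [h₁, h₀, condExp_ae_eq_smul_condExp_cond_add_smul_condExp_cond_compl hm hs hU,
    hcompl] with ω h₁ω h₀ω hmix hcomplω
  rw [h₁ω, h₀ω, hmix]
  simp only [Pi.add_apply, Pi.smul_apply', hcomplω, Pi.sub_apply, Pi.one_apply, add_dotProduct,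
    smul_dotProduct, dotProduct_add, dotProduct_sub, dotProduct_smul, smul_eq_mul]
  ring

end ProbabilityTheory

theorem stmt12_general {Ω : Type*} [mΩ : MeasurableSpace Ω]
    (μ : Measure Ω) [IsProbabilityMeasure μ]
    {k p : ℕ} (U : Ω → Fin k → ℝ) (Z : Ω → Fin p → ℝ) (A : Ω → ℝ) (εY : Ω → ℝ)
    (hU : Measurable U) (hZ : Measurable Z) (hA : Measurable A)
    (c₀ c₂ : ℝ) (c₁ c₃ : Fin k → ℝ)
    -- `A` is binary with positivity `0 < P(A=1 | Z) < 1` a.s.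
    (hbin : ∀ ω, A ω = 0 ∨ A ω = 1)
    (hpos : ∀ᵐ ω ∂μ,
      0 < (μ[(fun ω' => if A ω' = 1 then (1 : ℝ) else 0) |
            MeasurableSpace.comap Z inferInstance]) ω ∧
      (μ[(fun ω' => if A ω' = 1 then (1 : ℝ) else 0) |
            MeasurableSpace.comap Z inferInstance]) ω < 1)
    -- mean-zero noise: `E[ε_Y | U, Z, A] = 0`
    (hnoise : μ[εY | MeasurableSpace.comap (fun ω => (U ω, Z ω, A ω)) inferInstance]
      =ᵐ[μ] 0)
    -- the outcome and potential outcomes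
    (Y : Ω → ℝ)
    (hY : ∀ ω, Y ω = εY ω + (c₀ + c₁ ⬝ᵥ U ω) + A ω * (c₂ + c₃ ⬝ᵥ U ω))
    (Ypot : ℝ → Ω → ℝ)
    (hYpot : ∀ a ω, Ypot a ω = εY ω + (c₀ + c₁ ⬝ᵥ U ω) + a * (c₂ + c₃ ⬝ᵥ U ω))
    -- integrability
    (hYint : Integrable Y μ) (hUint : Integrable U μ)
    -- conditional orthogonality, almost surely
    (horth : ∀ᵐ ω ∂μ,
      (c₁ + (μ[(fun ω'' => if A ω'' = 0 then (1 : ℝ) else 0) |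
          MeasurableSpace.comap Z inferInstance]) ω • c₃) ⬝ᵥ
        (((μ[|{ω' | A ω' = 1}])[U | MeasurableSpace.comap Z inferInstance]) ω -
          ((μ[|{ω' | A ω' = 0}])[U | MeasurableSpace.comap Z inferInstance]) ω) = 0) :
    ∀ᵐ ω ∂μ,
      ((μ[|{ω' | A ω' = 1}])[Y | MeasurableSpace.comap Z inferInstance]) ω -
        ((μ[|{ω' | A ω' = 0}])[Y | MeasurableSpace.comap Z inferInstance]) ω =
      (μ[(fun ω' => Ypot 1 ω' - Ypot 0 ω') | MeasurableSpace.comap Z inferInstance]) ω := by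
  set s := {ω | A ω = 1}
  have hm : MeasurableSpace.comap Z inferInstance ≤ mΩ := hZ.comap_le
  have hs : MeasurableSet s := hA (measurableSet_singleton 1)
  have hs0 : {ω | A ω = 0} = sᶜ := by
    ext ω; rcases hbin ω with h | h <;> simp [s, h]
  have hind : ∀ a, (fun ω => if A ω = a then (1 : ℝ) else 0) = {ω | A ω = a}.indicator 1 :=
    fun a => by ext ω; simp [Set.indicator_apply]
  rw [hind] at hpos horth
  rw [hs0] at horth ⊢
  have hYs : ∀ ω, Y ω = εY ω + (c₀ + c₁ ⬝ᵥ U ω) + s.indicator (fun ω => c₂ + c₃ ⬝ᵥ U ω) ω :=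
    fun ω => by rcases hbin ω with h | h <;> simp [hY, h, s]
  have hε : Integrable εY μ := by
    refine ((hYint.sub ((integrable_const c₀).add ((dotProductCLM c₁).integrable_comp hUint))).sub
      (((integrable_const c₂).add ((dotProductCLM c₃).integrable_comp hUint)).indicator hs)).congr
      (ae_of_all _ fun ω => ?_)
    simp only [Pi.sub_apply, hYs ω, Pi.add_def, dotProductCLM_apply]
    ring
  have hnoise_arm : ∀ a, μ[{ω | A ω = a}.indicator εY | MeasurableSpace.comap Z inferInstance]
      =ᵐ[μ] 0 := fun a =>
    condExp_indicator_ae_eq_zero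
      (measurable_fst.comp (measurable_snd.comp (comap_measurable _))).comap_le
      (hU.prodMk (hZ.prodMk hA)).comap_le
      (measurable_snd.comp (measurable_snd.comp (comap_measurable _)) (measurableSet_singleton a))
      hε hnoise
  have hcate : (fun ω => Ypot 1 ω - Ypot 0 ω) = fun ω => c₂ + c₃ ⬝ᵥ U ω := by
    funext ω; rw [hYpot, hYpot]; ring
  filter_upwards [condExp_cond_sub_condExp_cond_compl_ae_eq hm hs hpos hYint hε hUint
      (hnoise_arm 1) (hs0 ▸ hnoise_arm 0) c₀ c₂ c₁ c₃ hYs,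
    hcate ▸ condExp_const_add_dotProduct hm hUint c₂ c₃, horth] with ω hbias hc ho
  rw [hbias, hc, ho, add_zero]

/-- In the affine-in-`U` additive noise model, if `c₁ + P(A=0 | Z) c₃` is orthogonal to
`E[U | Z, A=1] − E[U | Z, A=0]` (conditionally on `Z`, almost surely), then the naive
proxy-adjusted estimator `E[Y | Z, A=1] − E[Y | Z, A=0]` equals the true CATE
`E[Y(1) − Y(0) | Z]` almost surely. -/
theorem stmt12 {Ω : Type*} [mΩ : MeasurableSpace Ω]
    (μ : Measure Ω) [IsProbabilityMeasure μ]
    {k p : ℕ} (U : Ω → Fin k → ℝ) (Z : Ω → Fin p → ℝ) (A : Ω → ℝ) (εY : Ω → ℝ)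
    (hU : Measurable U) (hZ : Measurable Z) (hA : Measurable A) (hεY : Measurable εY)
    (c₀ c₂ : ℝ) (c₁ c₃ : Fin k → ℝ)
    -- `A` is binary with positivity `0 < P(A=1 | Z) < 1` a.s.
    (hbin : ∀ ω, A ω = 0 ∨ A ω = 1)
    (hpos : ∀ᵐ ω ∂μ,
      0 < (μ[(fun ω' => if A ω' = 1 then (1 : ℝ) else 0) |
            MeasurableSpace.comap Z inferInstance]) ω ∧
      (μ[(fun ω' => if A ω' = 1 then (1 : ℝ) else 0) |
            MeasurableSpace.comap Z inferInstance]) ω < 1)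
    -- mean-zero noise: `E[ε_Y | U, Z, A] = 0`
    (hnoise : μ[εY | MeasurableSpace.comap (fun ω => (U ω, Z ω, A ω)) inferInstance]
      =ᵐ[μ] 0)
    -- the outcome and potential outcomes
    (Y : Ω → ℝ)
    (hY : ∀ ω, Y ω = εY ω + (c₀ + c₁ ⬝ᵥ U ω) + A ω * (c₂ + c₃ ⬝ᵥ U ω))
    (Ypot : ℝ → Ω → ℝ)
    (hYpot : ∀ a ω, Ypot a ω = εY ω + (c₀ + c₁ ⬝ᵥ U ω) + a * (c₂ + c₃ ⬝ᵥ U ω))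
    -- integrability
    (hYint : Integrable Y μ) (hUint : Integrable U μ)
    -- conditional orthogonality, almost surely
    (horth : ∀ᵐ ω ∂μ,
      (c₁ + (μ[(fun ω'' => if A ω'' = 0 then (1 : ℝ) else 0) |
          MeasurableSpace.comap Z inferInstance]) ω • c₃) ⬝ᵥ
        (((μ[|{ω' | A ω' = 1}])[U | MeasurableSpace.comap Z inferInstance]) ω -
          ((μ[|{ω' | A ω' = 0}])[U | MeasurableSpace.comap Z inferInstance]) ω) = 0) :
    ∀ᵐ ω ∂μ,
      ((μ[|{ω' | A ω' = 1}])[Y | MeasurableSpace.comap Z inferInstance]) ω -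
        ((μ[|{ω' | A ω' = 0}])[Y | MeasurableSpace.comap Z inferInstance]) ω =
      (μ[(fun ω' => Ypot 1 ω' - Ypot 0 ω') | MeasurableSpace.comap Z inferInstance]) ω :=
  stmt12_general (mΩ := mΩ) μ U Z A εY hU hZ hA c₀ c₂ c₁ c₃ hbin hpos hnoise Y hY Ypot hYpot hYint
    hUint horth
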